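/- arXiv:2208.13240 — 4 statements merged into one kernel-verified Lean document; each statement's English description precedes it below -/
import Mathlib

section
/- Let $p_1, \ldots, p_\ell$ be distinct primes and $a$ an integer with $\gcd(a, p_1 \cdots p_\ell) = 1$. Then $a$ generates a subgroup of maximal order $\lambda(p_1 \cdots p_\ell)$ in $(\mathbb{Z}/p_1\cdots p_\ell\mathbb{Z})^*$ if and only if for every prime $q$ dividing $\lambda(p_1 \cdots p_\ell)$, there exists $p \in M_q(p_1, \ldots, p_\ell)$ such that $a$ is not a $q$-th power residue modulo $p$. -/
/-!
By the Chinese remainder theorem the order of `a` modulo `N = p₁ ⋯ p_ℓ` is the lcm of its orders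
`dᵢ` modulo the `pᵢ`, and `λ(N)` is the lcm of the `pᵢ - 1`. Since `dᵢ ∣ pᵢ - 1`, the two lcms agree
iff for every prime `q ∣ λ(N)` some `pᵢ ∈ M_q` has `ν_q(dᵢ) = ν_q(pᵢ - 1)`. In the cyclic group
`(ℤ/pᵢℤ)ˣ` of order `pᵢ - 1`, an element is a `q`-th power iff its order divides `(pᵢ - 1)/q`,
i.e. iff `ν_q(dᵢ) < ν_q(pᵢ - 1)`.
-/

open ArithmeticFunction

namespace Nat

lemma dvd_div_iff_factorization_lt {m n q : ℕ} (hq : q.Prime) (hqn : q ∣ n) (hmn : m ∣ n)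
    (hn : n ≠ 0) : m ∣ n / q ↔ m.factorization q < n.factorization q := by
  obtain ⟨c, rfl⟩ := hmn
  have hm : m ≠ 0 := left_ne_zero_of_mul hn
  have hc : c ≠ 0 := right_ne_zero_of_mul hn
  rw [Nat.dvd_div_iff_mul_dvd hqn, mul_comm, Nat.mul_dvd_mul_iff_left (Nat.pos_of_ne_zero hm),
    Nat.factorization_mul hm hc, Finsupp.add_apply, hq.dvd_iff_one_le_factorization hc]
  omega

lemma eq_iff_factorization_le_of_dvd {m n : ℕ} (hmn : m ∣ n) (hn : n ≠ 0) :
    m = n ↔ ∀ q : ℕ, q.Prime → q ∣ n → n.factorization q ≤ m.factorization q := by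
  refine ⟨fun h q _ _ => h ▸ le_rfl, fun h => Nat.dvd_antisymm hmn ?_⟩
  have hm : m ≠ 0 := ne_zero_of_dvd_ne_zero hn hmn
  refine (Nat.factorization_prime_le_iff_dvd hn hm).1 fun q hq => ?_
  by_cases hqn : q ∣ n
  · exact h q hq hqn
  · simp [Nat.factorization_eq_zero_of_not_dvd hqn]

lemma finset_lcm_eq_lcm_iff {ι : Type*} {s : Finset ι} {d n : ι → ℕ}
    (hdn : ∀ i ∈ s, d i ∣ n i) (hn : ∀ i ∈ s, n i ≠ 0) :
    s.lcm d = s.lcm n ↔ ∀ q : ℕ, q.Prime → q ∣ s.lcm n →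
      ∃ i ∈ s, (n i).factorization q = (s.lcm n).factorization q ∧
        (d i).factorization q = (n i).factorization q := by
  have hd : ∀ i ∈ s, d i ≠ 0 := fun i hi => ne_zero_of_dvd_ne_zero (hn i hi) (hdn i hi)
  have hL : s.lcm n ≠ 0 := Finset.lcm_ne_zero_iff.2 hn
  have hle : ∀ i ∈ s, ∀ q, (d i).factorization q ≤ (n i).factorization q ∧
      (n i).factorization q ≤ (s.lcm n).factorization q := fun i hi q =>
    ⟨(Nat.factorization_le_iff_dvd (hd i hi) (hn i hi)).2 (hdn i hi) q,
      (Nat.factorization_le_iff_dvd (hn i hi) hL).2 (Finset.dvd_lcm hi) q⟩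
  rw [eq_iff_factorization_le_of_dvd (Finset.lcm_dvd fun i hi => (hdn i hi).trans
    (Finset.dvd_lcm hi)) hL]
  refine forall₃_congr fun q hq hqL => ?_
  rw [Finset.factorization_lcm hd, Finset.le_sup_iff (hq.factorization_pos_of_dvd hL hqL)]
  refine exists_congr fun i => and_congr_right fun hi => ?_
  have := hle i hi q
  omega

end Nat

lemma IsCyclic.exists_pow_eq_iff_pow_card_div_eq_one {G : Type*} [CommGroup G] [IsCyclic G]
    [Finite G] {q : ℕ} (hq : q ∣ Nat.card G) (x : G) :
    (∃ y, y ^ q = x) ↔ x ^ (Nat.card G / q) = 1 := by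
  have hrange : (powMonoidHom q : G →* G).range = (powMonoidHom (Nat.card G / q)).ker := by
    refine Subgroup.eq_of_le_of_card_ge ?_ ?_
    · rintro _ ⟨y, rfl⟩
      simp [← pow_mul, Nat.mul_div_cancel' hq, pow_card_eq_one']
    · rw [IsCyclic.card_powMonoidHom_range, IsCyclic.card_powMonoidHom_ker, Nat.gcd_eq_right hq,
        Nat.gcd_eq_right (Nat.div_dvd_of_dvd hq)]
  exact SetLike.ext_iff.1 hrange x

lemma IsCyclic.exists_pow_eq_iff_factorization_orderOf_lt {G : Type*} [CommGroup G] [IsCyclic G]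
    [Finite G] {q : ℕ} (hq : q.Prime) (hqG : q ∣ Nat.card G) (x : G) :
    (∃ y, y ^ q = x) ↔ (orderOf x).factorization q < (Nat.card G).factorization q := by
  rw [exists_pow_eq_iff_pow_card_div_eq_one hqG, ← orderOf_dvd_iff_pow_eq_one,
    Nat.dvd_div_iff_factorization_lt hq hqG (orderOf_dvd_natCard x) Nat.card_pos.ne']

lemma exists_pow_eq_iff_exists_units_pow_eq {G₀ : Type*} [GroupWithZero G₀] {q : ℕ}
    (hq : q ≠ 0) {a : G₀} (ha : a ≠ 0) :
    (∃ y : G₀, y ^ q = a) ↔ ∃ v : G₀ˣ, v ^ q = Units.mk0 a ha := by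
  constructor
  · rintro ⟨y, rfl⟩
    have hy : y ≠ 0 := fun h => ha (by rw [h, zero_pow hq])
    exact ⟨Units.mk0 y hy, Units.ext (by simp)⟩
  · rintro ⟨v, hv⟩
    exact ⟨v, by simpa using congrArg Units.val hv⟩

namespace ZMod

lemma exists_pow_eq_intCast_iff {n q : ℕ} {a : ℤ} :
    (∃ y : ZMod n, y ^ q = a) ↔ ∃ b : ℤ, (n : ℤ) ∣ b ^ q - a := by
  simp_rw [← ZMod.intCast_eq_intCast_iff_dvd_sub, Int.cast_pow, eq_comm (a := (a : ZMod n))]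
  exact ⟨fun ⟨y, hy⟩ => ⟨y.cast, by rw [ZMod.intCast_zmod_cast, hy]⟩, fun ⟨b, hb⟩ => ⟨b, hb⟩⟩

lemma not_exists_dvd_pow_sub_iff {p q : ℕ} [Fact p.Prime] (hq : q.Prime) (hqp : q ∣ p - 1)
    {a : ℤ} (ha : (a : ZMod p) ≠ 0) :
    (¬ ∃ b : ℤ, (p : ℤ) ∣ b ^ q - a) ↔
      (orderOf (a : ZMod p)).factorization q = (p - 1).factorization q := by
  have hcard : Nat.card (ZMod p)ˣ = p - 1 := by rw [Nat.card_eq_fintype_card, ZMod.card_units]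
  have hp1 : p - 1 ≠ 0 := Nat.sub_ne_zero_of_lt (Fact.out : p.Prime).one_lt
  have hdvd := ZMod.orderOf_dvd_card_sub_one ha
  have hle : (orderOf (a : ZMod p)).factorization q ≤ (p - 1).factorization q :=
    (Nat.factorization_le_iff_dvd (ne_zero_of_dvd_ne_zero hp1 hdvd) hp1).2 hdvd q
  rw [← exists_pow_eq_intCast_iff, exists_pow_eq_iff_exists_units_pow_eq hq.ne_zero ha,
    IsCyclic.exists_pow_eq_iff_factorization_orderOf_lt hq (hcard ▸ hqp), hcard, ← orderOf_units,
    Units.val_mk0]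
  omega

lemma orderOf_intCast_dvd_iff (n k : ℕ) (a : ℤ) :
    orderOf (a : ZMod n) ∣ k ↔ (n : ℤ) ∣ a ^ k - 1 := by
  rw [← ZMod.intCast_zmod_eq_zero_iff_dvd, Int.cast_sub, Int.cast_pow, Int.cast_one, sub_eq_zero,
    orderOf_dvd_iff_pow_eq_one]

lemma orderOf_intCast_prod {ι : Type*} [Fintype ι] {n : ι → ℕ}
    (hn : Pairwise (Function.onFun Nat.Coprime n)) (a : ℤ) :
    orderOf (a : ZMod (∏ i, n i)) = Finset.univ.lcm fun i => orderOf (a : ZMod (n i)) := by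
  refine eq_of_forall_dvd fun k => ?_
  simp_rw [Finset.lcm_dvd_iff, Finset.mem_univ, true_implies, orderOf_intCast_dvd_iff,
    Nat.cast_prod]
  exact ⟨fun h i => (Finset.dvd_prod_of_mem _ (Finset.mem_univ i)).trans h,
    Fintype.prod_dvd_of_coprime fun i j hij => Nat.isCoprime_iff_coprime.2 (hn hij)⟩

end ZMod

lemma ArithmeticFunction.carmichael_of_prime {p : ℕ} (hp : p.Prime) : carmichael p = p - 1 := by
  have := Fact.mk hp
  rw [carmichael_eq_exponent hp.ne_zero, IsCyclic.exponent_eq_card, Nat.card_eq_fintype_card,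
    ZMod.card_units]

theorem generalized_primitive_root_characterization_general (ℓ : ℕ)
    (p : Fin ℓ → ℕ) (hp : ∀ i, (p i).Prime) (hinj : Function.Injective p)
    (a : ℤ) (ha : IsCoprime a ((∏ i, p i : ℕ) : ℤ)) :
    orderOf (a : ZMod (∏ i, p i)) = Monoid.exponent (ZMod (∏ i, p i))ˣ ↔
      ∀ q : ℕ, q.Prime → q ∣ Monoid.exponent (ZMod (∏ i, p i))ˣ →
        ∃ i : Fin ℓ, (p i - 1).factorization q =
            (Monoid.exponent (ZMod (∏ i, p i))ˣ).factorization q ∧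
          ¬ ∃ b : ℤ, ((p i : ℤ)) ∣ b ^ q - a := by
  have := fun i => Fact.mk (hp i)
  have hcop : Pairwise (Function.onFun Nat.Coprime p) := fun i j hij =>
    (Nat.coprime_primes (hp i) (hp j)).2 (hinj.ne hij)
  have hexp : Monoid.exponent (ZMod (∏ i, p i))ˣ = Finset.univ.lcm fun i => p i - 1 := by
    rw [← carmichael_eq_exponent (Finset.prod_ne_zero_iff.2 fun i _ => (hp i).ne_zero),
      carmichael_finsetProd (hcop.set_pairwise _)]
    simp [Function.comp_def, carmichael_of_prime (hp _)]
  have ha_ne : ∀ i, (a : ZMod (p i)) ≠ 0 := fun i h =>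
    (Nat.prime_iff_prime_int.1 (hp i)).not_isUnit <| ha.isUnit_of_dvd'
      ((ZMod.intCast_zmod_eq_zero_iff_dvd _ _).1 h)
      (Int.natCast_dvd_natCast.2 (Finset.dvd_prod_of_mem p (Finset.mem_univ i)))
  have hp1 : ∀ i ∈ Finset.univ, p i - 1 ≠ 0 := fun i _ => Nat.sub_ne_zero_of_lt (hp i).one_lt
  have hL : (Finset.univ.lcm fun i => p i - 1) ≠ 0 := Finset.lcm_ne_zero_iff.2 hp1
  rw [ZMod.orderOf_intCast_prod hcop, hexp,
    Nat.finset_lcm_eq_lcm_iff (fun i _ => ZMod.orderOf_dvd_card_sub_one (ha_ne i)) hp1]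
  refine forall₃_congr fun q hq hqL => exists_congr fun i => ?_
  simp only [Finset.mem_univ, true_and]
  refine and_congr_right fun hi => (ZMod.not_exists_dvd_pow_sub_iff hq ?_ (ha_ne i)).symm
  exact Nat.dvd_of_factorization_pos (hi ▸ (hq.factorization_pos_of_dvd hL hqL).ne')

theorem generalized_primitive_root_characterization (ℓ : ℕ) (hℓ : 0 < ℓ)
    (p : Fin ℓ → ℕ) (hp : ∀ i, (p i).Prime) (hinj : Function.Injective p)
    (a : ℤ) (ha : IsCoprime a ((∏ i, p i : ℕ) : ℤ)) :
    orderOf (a : ZMod (∏ i, p i)) = Monoid.exponent (ZMod (∏ i, p i))ˣ ↔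
      ∀ q : ℕ, q.Prime → q ∣ Monoid.exponent (ZMod (∏ i, p i))ˣ →
        ∃ i : Fin ℓ, (p i - 1).factorization q =
            (Monoid.exponent (ZMod (∏ i, p i))ˣ).factorization q ∧
          ¬ ∃ b : ℤ, ((p i : ℤ)) ∣ b ^ q - a :=
  generalized_primitive_root_characterization_general ℓ p hp hinj a ha
end

section
/- Let $\alpha$ be a positive integer and $\beta$ a squarefree positive integer. Then $\sum_{d \mid \beta} \frac{\mu(d)}{\varphi(\alpha d)} = \frac{1}{\varphi(\alpha)} \prod_{\substack{p \mid \beta \\ p \mid \alpha}} \left(1 - \frac{1}{p}\right) \prod_{\substack{p \mid \beta \\ p \nmid \alpha}} \left(1 - \frac{1}{p-1}\right).$ -/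
/-!
For squarefree `d`, `φ (α * d) = φ α * ∏_{p ∣ d} g p` with `g p = p` if `p ∣ α` and
`g p = p - 1` otherwise. Hence `μ d / φ (α * d)` is `(φ α)⁻¹` times the multiplicative function
`μ d * ∏_{p ∣ d} (g p)⁻¹`, whose sum over the divisors of the squarefree `β` is the Euler product
`∏_{p ∣ β} (1 - (g p)⁻¹)`.
-/

open Finset ArithmeticFunction
open scoped ArithmeticFunction.Moebius Nat

namespace Nat

theorem cast_totient_mul (a d : ℕ) :
    (φ (a * d) : ℚ) = φ a * d * ∏ p ∈ d.primeFactors with ¬ p ∣ a, (1 - (p : ℚ)⁻¹) := by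
  rcases eq_or_ne a 0 with rfl | ha
  · simp
  rcases eq_or_ne d 0 with rfl | hd
  · simp
  have hnew : {p ∈ d.primeFactors | ¬ p ∣ a} = d.primeFactors \ a.primeFactors := by
    ext p
    simp +contextual [mem_primeFactors, ha]
  rw [totient_eq_mul_prod_factors, totient_eq_mul_prod_factors, primeFactors_mul ha hd,
    ← union_sdiff_self_eq_union, prod_union disjoint_sdiff, hnew]
  push_cast
  ring

theorem cast_totient_mul_of_squarefree_right (a : ℕ) {d : ℕ} (hd : Squarefree d) :
    (φ (a * d) : ℚ) = φ a * ∏ p ∈ d.primeFactors, if p ∣ a then (p : ℚ) else p - 1 := by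
  rw [cast_totient_mul, prod_filter]
  nth_rw 1 [← prod_primeFactors_of_squarefree hd]
  rw [cast_prod, mul_assoc, ← prod_mul_distrib]
  congr 1
  refine prod_congr rfl fun p hp => ?_
  have hp0 : (p : ℚ) ≠ 0 := cast_ne_zero.2 (pos_of_mem_primeFactors hp).ne'
  split_ifs <;> field_simp

end Nat

theorem ArithmeticFunction.prodPrimeFactors_apply_prime {R : Type*} [CommMonoidWithZero R]
    (f : ℕ → R) {p : ℕ} (hp : p.Prime) : prodPrimeFactors f p = f p := by
  rw [prodPrimeFactors_apply hp.ne_zero, hp.primeFactors, prod_singleton]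

theorem moebius_totient_divisor_sum_general (α β : ℕ) (hsq : Squarefree β) :
    ∑ d ∈ β.divisors, (ArithmeticFunction.moebius d : ℚ) / (Nat.totient (α * d)) =
      (1 / Nat.totient α) *
        (∏ p ∈ β.primeFactors.filter (fun p => p ∣ α), (1 - 1 / (p : ℚ))) *
        (∏ p ∈ β.primeFactors.filter (fun p => ¬ p ∣ α), (1 - 1 / ((p : ℚ) - 1))) := by
  set g : ℕ → ℚ := fun p => (if p ∣ α then (p : ℚ) else p - 1)⁻¹
  have hsummand : ∀ d ∈ β.divisors,
      (μ d : ℚ) / φ (α * d) = 1 / φ α * (μ d * prodPrimeFactors g d) := by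
    intro d hd
    rw [Nat.cast_totient_mul_of_squarefree_right α
        (hsq.squarefree_of_dvd (Nat.dvd_of_mem_divisors hd)),
      prodPrimeFactors_apply (Nat.ne_of_gt (Nat.pos_of_mem_divisors hd)), prod_inv_distrib]
    ring
  rw [sum_congr rfl hsummand, ← mul_sum,
    ← (IsMultiplicative.prodPrimeFactors g).prodPrimeFactors_one_sub_of_squarefree _ hsq,
    prod_congr rfl fun p hp => by
      rw [prodPrimeFactors_apply_prime g (Nat.prime_of_mem_primeFactors hp)],
    ← prod_filter_mul_prod_filter_not _ (· ∣ α), mul_assoc]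
  congr 2 <;> refine prod_congr rfl fun p hp => ?_ <;> simp [g, (mem_filter.1 hp).2]

theorem moebius_totient_divisor_sum (α β : ℕ) (hα : 0 < α) (hβ : 0 < β)
    (hsq : Squarefree β) :
    ∑ d ∈ β.divisors, (ArithmeticFunction.moebius d : ℚ) / (Nat.totient (α * d)) =
      (1 / Nat.totient α) *
        (∏ p ∈ β.primeFactors.filter (fun p => p ∣ α), (1 - 1 / (p : ℚ))) *
        (∏ p ∈ β.primeFactors.filter (fun p => ¬ p ∣ α), (1 - 1 / ((p : ℚ) - 1))) :=
  moebius_totient_divisor_sum_general α β hsq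
end

section
/- For any integer $\ell \geq 1$ and any real $x$ large enough, the number of integers $n \le x$ of the form $n = p_1 \cdots p_\ell$ with primes $p_1 < \cdots < p_\ell$ such that $p_1 \le (\log x)^{64}$ is $O\left(\frac{x}{\log x} (\log\log x)^{\ell - 2} \log\log\log x\right)$. -/
/-!
Count the sets `s` of `ℓ` primes rather than their products `n = ∏ s`. Products at most
`x / log x` contribute at most `x / log x`. Otherwise write `s = {p, q} ∪ r` with
`p ≤ y = (log x)^64` and `q` the largest element of `s \ {p}`: then `x / log x < n ≤ y q^(ℓ-1)`
forces `q^(ℓ-1) > √x`, so `log q ≥ log x / (2(ℓ-1))`, and Chebyshev's bound `θ(t) ≤ t log 4`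
leaves `≪ ℓ x / (p r log x)` choices of `q ≤ x / (p r)`. Summing over `p` and `r` costs
`∑_{p ≤ y} 1/p · (∑_{p ≤ x} 1/p)^(ℓ-2)`, which a dyadic form of Mertens' estimate bounds by
`≪ log log log x · (log log x)^(ℓ-2)`. For `ℓ = 1` the count is at most `y`.
-/

open Nat hiding log
open Finset Real Filter Chebyshev

theorem Finset.sum_powersetCard_prod_le_pow {ι R : Type*} [CommSemiring R] [PartialOrder R]
    [IsOrderedRing R] (s : Finset ι) {f : ι → R} (hf : ∀ i ∈ s, 0 ≤ f i) (k : ℕ) :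
    ∑ t ∈ s.powersetCard k, ∏ i ∈ t, f i ≤ (∑ i ∈ s, f i) ^ k := by
  classical
  induction s using Finset.induction_on generalizing k with
  | empty =>
    cases k with
    | zero => simp
    | succ k => simp [powersetCard_eq_empty.mpr (card_empty.trans_lt k.succ_pos)]
  | insert a s ha ih =>
    have hf' : ∀ i ∈ s, 0 ≤ f i := fun i hi ↦ hf i (mem_insert_of_mem hi)
    have hS : 0 ≤ ∑ i ∈ s, f i := sum_nonneg hf'
    have hfa : 0 ≤ f a := hf a (mem_insert_self a s)
    cases k with
    | zero => simp
    | succ k =>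
      have ha' : ∀ t ∈ s.powersetCard k, a ∉ t := fun t ht h ↦ ha ((mem_powersetCard.mp ht).1 h)
      have hdisj : Disjoint (s.powersetCard (k + 1)) ((s.powersetCard k).image (insert a)) := by
        refine disjoint_left.mpr fun t ht ht' ↦ ?_
        obtain ⟨u, -, rfl⟩ := mem_image.mp ht'
        exact ha ((mem_powersetCard.mp ht).1 (mem_insert_self a u))
      have hinj : Set.InjOn (insert a) (s.powersetCard k : Set (Finset ι)) :=
        fun u hu v hv huv ↦ by rw [← erase_insert (ha' u hu), ← erase_insert (ha' v hv), huv]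
      rw [powersetCard_succ_insert ha, sum_union hdisj, sum_image hinj, sum_insert ha,
        sum_congr rfl fun t ht ↦ prod_insert (ha' t ht), ← mul_sum]
      calc _ ≤ (∑ i ∈ s, f i) ^ (k + 1) + f a * (∑ i ∈ s, f i) ^ k := by
            gcongr <;> exact ih hf' _
        _ ≤ (f a + ∑ i ∈ s, f i) ^ (k + 1) := by
            rw [pow_succ, pow_succ, mul_comm (f a), ← mul_add, add_comm (f a)]
            exact mul_le_mul_of_nonneg_right
              (pow_le_pow_left₀ hS (le_add_of_nonneg_right hfa) k) (add_nonneg hS hfa)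

theorem Real.log_four_lt : log 4 < 1.4 := by
  rw [log_four_eq]
  linarith [log_two_lt_d9]

namespace Chebyshev

theorem card_primesLE_filter_le_log_mul_le {X : ℝ} (hX : 0 ≤ X) (c : ℝ) :
    #{q ∈ primesLE ⌊X⌋₊ | c ≤ log (q : ℕ)} * c ≤ log 4 * X :=
  calc #{q ∈ primesLE ⌊X⌋₊ | c ≤ log (q : ℕ)} * c
      ≤ ∑ q ∈ primesLE ⌊X⌋₊ with c ≤ log (q : ℕ), log q := by
        simpa using card_nsmul_le_sum _ (fun q : ℕ ↦ log q) c fun q hq ↦ (mem_filter.mp hq).2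
    _ ≤ θ X := by
        rw [theta_eq_sum_primesLE]
        exact sum_le_sum_of_subset_of_nonneg (filter_subset _ _) fun q _ _ ↦ log_natCast_nonneg q
    _ ≤ log 4 * X := theta_le_log4_mul_x hX

theorem card_primesLE_mul_log_le {n : ℕ} (hn : 2 ≤ n) : #(primesLE n) * log n ≤ 5 * n := by
  have hn1 : (1 : ℝ) < n := by exact_mod_cast hn
  have hlog : 0 < log n := log_pos hn1
  have hpi := pi_le_log4_mul_div hn1
  rw [floor_natCast, ← primesLE_card_eq_primeCounting, log_sqrt (by positivity)] at hpi
  have hsqrt : log n ≤ 2 * √n := by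
    have := log_le_sub_one_of_pos (sqrt_pos.mpr (by positivity : (0 : ℝ) < n))
    rw [log_sqrt (by positivity)] at this
    linarith
  have hsq : √n * √n = n := mul_self_sqrt (by positivity)
  calc #(primesLE n) * log n ≤ (log 4 * n / (log n / 2) + √n) * log n := by gcongr
    _ = 2 * log 4 * n + √n * log n := by field_simp
    _ ≤ 5 * n := by nlinarith [sqrt_nonneg (n : ℝ), log_four_lt]

theorem sum_inv_primesLE_two_pow_le (m : ℕ) :
    ∑ p ∈ primesLE (2 ^ m), (p : ℝ)⁻¹ ≤ 15 * harmonic m := by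
  induction m with
  | zero => simp [primesLE_one]
  | succ m ih =>
    have hsub : primesLE (2 ^ m) ⊆ primesLE (2 ^ (m + 1)) :=
      primesLE_mono (Nat.pow_le_pow_right two_pos m.le_succ)
    have hterm : ∀ p ∈ primesLE (2 ^ (m + 1)) \ primesLE (2 ^ m), (p : ℝ)⁻¹ ≤ (2 ^ m)⁻¹ := by
      intro p hp
      obtain ⟨hp1, hp2⟩ := mem_sdiff.mp hp
      have : 2 ^ m < p := by
        by_contra! h
        exact hp2 (mem_primesLE.mpr ⟨h, prime_of_mem_primesLE hp1⟩)
      gcongr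
      exact_mod_cast this.le
    have hcard := card_primesLE_mul_log_le (n := 2 ^ (m + 1))
      (le_self_pow₀ one_le_two m.succ_ne_zero)
    rw [Nat.cast_pow, Real.log_pow, Nat.cast_ofNat] at hcard
    push_cast at hcard
    have hlog2 := log_two_gt_d9
    have hnew : ∑ p ∈ primesLE (2 ^ (m + 1)) \ primesLE (2 ^ m), (p : ℝ)⁻¹ ≤ 15 * ((m : ℝ) + 1)⁻¹ :=
      calc _ ≤ (#(primesLE (2 ^ (m + 1)) \ primesLE (2 ^ m)) : ℝ) * (2 ^ m)⁻¹ := by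
            simpa using sum_le_card_nsmul _ _ _ hterm
        _ ≤ (#(primesLE (2 ^ (m + 1))) : ℝ) * (2 ^ m)⁻¹ := by gcongr; exact sdiff_subset
        _ ≤ 5 * 2 ^ (m + 1) / ((m + 1) * log 2) * (2 ^ m)⁻¹ := by
            gcongr
            rw [le_div_iff₀ (by positivity)]
            linarith
        _ = 10 / ((m + 1) * log 2) := by field_simp; ring
        _ ≤ 15 * ((m : ℝ) + 1)⁻¹ := by
            rw [← div_eq_mul_inv, div_le_div_iff₀ (by positivity) (by positivity)]
            nlinarith
    rw [← sum_sdiff hsub, harmonic_succ]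
    push_cast
    linarith

theorem sum_inv_primesLE_le {t : ℝ} (ht : 2 ≤ t) :
    ∑ p ∈ primesLE ⌊t⌋₊, (p : ℝ)⁻¹ ≤ 15 * (3 + log (log t)) := by
  set k := Nat.log 2 ⌊t⌋₊
  have hlog2 := log_two_gt_d9
  have hlogt : log 2 ≤ log t := log_le_log two_pos ht
  have hk : k * log 2 ≤ log t := by
    have h : ((2 ^ k : ℕ) : ℝ) ≤ ⌊t⌋₊ :=
      mod_cast Nat.pow_log_le_self 2 (floor_pos.mpr (by linarith)).ne'
    rw [← Real.log_pow]
    exact log_le_log (by positivity) (by exact_mod_cast h.trans (floor_le (by linarith)))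
  have hk3 : ((k + 1 : ℕ) : ℝ) ≤ 3 * log t := by
    push_cast
    nlinarith
  calc ∑ p ∈ primesLE ⌊t⌋₊, (p : ℝ)⁻¹ ≤ ∑ p ∈ primesLE (2 ^ (k + 1)), (p : ℝ)⁻¹ :=
        sum_le_sum_of_subset_of_nonneg (primesLE_mono (Nat.lt_pow_succ_log_self one_lt_two _).le)
          fun _ _ _ ↦ by positivity
    _ ≤ 15 * (1 + log (k + 1 : ℕ)) := by
        grw [sum_inv_primesLE_two_pow_le, harmonic_le_one_add_log]
    _ ≤ 15 * (1 + log (3 * log t)) := by gcongr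
    _ ≤ 15 * (3 + log (log t)) := by
        rw [log_mul (by norm_num) (by linarith)]
        have : log 3 ≤ 2 := by linarith [log_le_sub_one_of_pos (by norm_num : (0 : ℝ) < 3)]
        linarith

end Chebyshev

theorem exp_one_le_log_log {x : ℝ} (hL : exp (exp 1) ≤ log x) : exp 1 ≤ log (log x) := by
  rw [← log_exp (exp 1)]
  exact log_le_log (exp_pos _) hL

theorem one_le_log_log_log {x : ℝ} (hL : exp (exp 1) ≤ log x) : 1 ≤ log (log (log x)) := by
  rw [← log_exp 1]
  exact log_le_log (exp_pos 1) (exp_one_le_log_log hL)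

theorem eventually_exp_exp_one_le_log_and_log_pow_le (n : ℕ) :
    ∀ᶠ x : ℝ in atTop, exp (exp 1) ≤ log x ∧ log x ^ n ≤ x := by
  filter_upwards [tendsto_log_atTop.eventually_ge_atTop (exp (exp 1)),
    isLittleO_pow_log_id_atTop.bound one_pos, eventually_ge_atTop 0] with x hL hx hx0
  refine ⟨hL, ?_⟩
  simpa [abs_of_nonneg hx0] using (le_abs_self _).trans hx

theorem log_le_two_mul_log_of_div_log_lt {x y q : ℝ} {n : ℕ} (hx : 1 < x) (hy : 0 ≤ y)
    (hxy : (y * log x) ^ 2 ≤ x) (h : x / log x < y * q ^ n) : log x ≤ 2 * n * log q := by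
  have hL : 0 < log x := log_pos hx
  have hsqrt : 0 < √x := sqrt_pos.mpr (by linarith)
  have hx_lt : √x * √x < √x * q ^ n := by
    rw [mul_self_sqrt (by linarith)]
    calc x = x / log x * log x := by field_simp
      _ < y * q ^ n * log x := by gcongr
      _ = y * log x * q ^ n := by ring
      _ ≤ √x * q ^ n := by
          have hqn : 0 < q ^ n := pos_of_mul_pos_right ((div_pos (by linarith) hL).trans h) hy
          gcongr
          exact le_sqrt_of_sq_le hxy
  have := log_lt_log hsqrt (lt_of_mul_lt_mul_left hx_lt hsqrt.le)
  rw [log_sqrt (by linarith), Real.log_pow] at this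
  linarith

noncomputable def primeSets (ℓ : ℕ) (x y : ℝ) : Finset (Finset ℕ) :=
  {s ∈ (primesLE ⌊x⌋₊).powersetCard ℓ | ((∏ p ∈ s, p : ℕ) : ℝ) ≤ x ∧ ∃ p ∈ s, (p : ℝ) ≤ y}

theorem prime_of_mem_primeSets {ℓ : ℕ} {x y : ℝ} {s : Finset ℕ} (hs : s ∈ primeSets ℓ x y)
    {p : ℕ} (hp : p ∈ s) : p.Prime :=
  prime_of_mem_primesLE ((mem_powersetCard.mp (mem_filter.mp hs).1).1 hp)

theorem ncard_le_card_primeSets (ℓ : ℕ) (x y : ℝ) :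
    {n : ℕ | (n : ℝ) ≤ x ∧ ∃ s : Finset ℕ, s.card = ℓ ∧ (∀ p ∈ s, p.Prime) ∧
      n = ∏ p ∈ s, p ∧ ∃ p ∈ s, (p : ℝ) ≤ y}.ncard ≤ #(primeSets ℓ x y) := by
  classical
  refine (Set.ncard_le_ncard (t := ↑((primeSets ℓ x y).image fun s ↦ ∏ p ∈ s, p)) ?_
    (Finset.finite_toSet _)).trans ((Set.ncard_coe_finset _).trans_le card_image_le)
  rintro n ⟨hnx, s, hcard, hprime, rfl, hsmall⟩
  refine mem_image.mpr ⟨s, mem_filter.mpr ⟨mem_powersetCard.mpr ⟨fun p hp ↦ ?_, hcard⟩,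
    hnx, hsmall⟩, rfl⟩
  have hle : p ≤ ∏ q ∈ s, q :=
    Nat.le_of_dvd (prod_pos fun q hq ↦ (hprime q hq).pos) (dvd_prod_of_mem _ hp)
  exact mem_primesLE.mpr ⟨le_floor (le_trans (by exact_mod_cast hle) hnx), hprime p hp⟩

theorem card_filter_prod_le {𝒮 : Finset (Finset ℕ)} (h𝒮 : ∀ s ∈ 𝒮, ∀ p ∈ s, p.Prime)
    {z : ℝ} (hz : 0 ≤ z) : (#{s ∈ 𝒮 | ((∏ p ∈ s, p : ℕ) : ℝ) ≤ z} : ℝ) ≤ z := by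
  have hmaps : ∀ s ∈ {s ∈ 𝒮 | ((∏ p ∈ s, p : ℕ) : ℝ) ≤ z}, ∏ p ∈ s, p ∈ Icc 1 ⌊z⌋₊ := by
    intro s hs
    obtain ⟨hs𝒮, hsz⟩ := mem_filter.mp hs
    exact mem_Icc.mpr ⟨prod_pos fun p hp ↦ (h𝒮 s hs𝒮 p hp).pos, le_floor hsz⟩
  calc (#{s ∈ 𝒮 | ((∏ p ∈ s, p : ℕ) : ℝ) ≤ z} : ℝ) ≤ #(Icc 1 ⌊z⌋₊) :=
        mod_cast card_le_card_of_injOn _ hmaps fun s hs t ht hst ↦ by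
          rw [← primeFactors_prod (h𝒮 s (mem_filter.mp hs).1),
            ← primeFactors_prod (h𝒮 t (mem_filter.mp ht).1)]
          exact congrArg _ hst
    _ ≤ z := by simpa using floor_le hz

theorem card_primeSets_one_le (x : ℝ) {y : ℝ} (hy : 0 ≤ y) : (#(primeSets 1 x y) : ℝ) ≤ y := by
  have hsmall : ∀ s ∈ primeSets 1 x y, ((∏ p ∈ s, p : ℕ) : ℝ) ≤ y := by
    intro s hs
    obtain ⟨hs1, -, p, hp, hpy⟩ := mem_filter.mp hs
    obtain ⟨q, rfl⟩ := card_eq_one.mp (mem_powersetCard.mp hs1).2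
    rw [mem_singleton.mp hp] at hpy
    simpa using hpy
  rw [← filter_true_of_mem hsmall]
  exact card_filter_prod_le (fun s hs p hp ↦ prime_of_mem_primeSets hs hp) hy

theorem exists_eq_insert_insert_of_mem_primeSets {k : ℕ} {x y z : ℝ} {s : Finset ℕ}
    (hs : s ∈ primeSets (k + 2) x y) (hzs : z < ((∏ p ∈ s, p : ℕ) : ℝ)) :
    ∃ p ∈ primesLE ⌊y⌋₊, ∃ r ∈ (primesLE ⌊x⌋₊).powersetCard k,
      ∃ q ∈ primesLE ⌊x / (p * ∏ i ∈ r, (i : ℝ))⌋₊,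
        z < y * (q : ℝ) ^ (k + 1) ∧ insert p (insert q r) = s := by
  obtain ⟨hs, hsx, p, hps, hpy⟩ := mem_filter.mp hs
  obtain ⟨hsP, hcard⟩ := mem_powersetCard.mp hs
  have hprime : ∀ i ∈ s, i.Prime := fun i hi ↦ prime_of_mem_primesLE (hsP hi)
  have hne : (s.erase p).Nonempty := by
    rw [← Finset.card_pos, card_erase_of_mem hps, hcard]; omega
  set q := (s.erase p).max' hne
  have hq : q ∈ s.erase p := max'_mem _ hne
  set r := (s.erase p).erase q
  have hpq : p ∉ insert q r := by
    rw [mem_insert, not_or]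
    exact ⟨fun h ↦ ne_of_mem_erase hq h.symm, fun h ↦ notMem_erase p s (mem_of_mem_erase h)⟩
  have hs_eq : insert p (insert q r) = s := by rw [insert_erase hq, insert_erase hps]
  have hprod : ((∏ i ∈ s, i : ℕ) : ℝ) = p * (q * ∏ i ∈ r, (i : ℝ)) := by
    rw [← hs_eq, prod_insert hpq, prod_insert (notMem_erase q _)]
    push_cast
    ring
  have hpos : (0 : ℝ) < p * ∏ i ∈ r, (i : ℝ) := mul_pos (mod_cast (hprime p hps).pos)
    (prod_pos fun i hi ↦ mod_cast (hprime i (mem_of_mem_erase (mem_of_mem_erase hi))).pos)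
  have hmax : ((∏ i ∈ s.erase p, i : ℕ) : ℝ) ≤ (q : ℝ) ^ (k + 1) := by
    have := prod_le_pow_card (s.erase p) (fun i ↦ i) q fun i hi ↦ le_max' _ i hi
    rw [card_erase_of_mem hps, hcard] at this
    exact_mod_cast this
  refine ⟨p, mem_primesLE.mpr ⟨le_floor hpy, hprime p hps⟩, r, mem_powersetCard.mpr
    ⟨((erase_subset _ _).trans (erase_subset _ _)).trans hsP, ?_⟩, q,
    mem_primesLE.mpr ⟨le_floor ?_, hprime q (mem_of_mem_erase hq)⟩, hzs.trans_le ?_, hs_eq⟩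
  · rw [card_erase_of_mem hq, card_erase_of_mem hps, hcard]
    rfl
  · rw [le_div_iff₀ hpos]
    linarith [hprod, hsx]
  · rw [← mul_prod_erase s (fun i ↦ i) hps, Nat.cast_mul]
    exact mul_le_mul hpy hmax (by positivity) ((cast_nonneg p).trans hpy)

theorem card_primeSets_filter_lt_prod_le (k : ℕ) (x y z : ℝ) :
    #{s ∈ primeSets (k + 2) x y | z < ((∏ p ∈ s, p : ℕ) : ℝ)} ≤
      ∑ p ∈ primesLE ⌊y⌋₊, ∑ r ∈ (primesLE ⌊x⌋₊).powersetCard k,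
        #{q ∈ primesLE ⌊x / (p * ∏ i ∈ r, (i : ℝ))⌋₊ | z < y * ((q : ℕ) : ℝ) ^ (k + 1)} := by
  classical
  set 𝒯 := ((primesLE ⌊y⌋₊ ×ˢ (primesLE ⌊x⌋₊).powersetCard k).sigma fun pr ↦
    {q ∈ primesLE ⌊x / (pr.1 * ∏ i ∈ pr.2, (i : ℝ))⌋₊ | z < y * ((q : ℕ) : ℝ) ^ (k + 1)})
  have hsub : {s ∈ primeSets (k + 2) x y | z < ((∏ p ∈ s, p : ℕ) : ℝ)} ⊆
      𝒯.image fun prq ↦ insert prq.1.1 (insert prq.2 prq.1.2) := by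
    intro s hs
    obtain ⟨hs, hzs⟩ := mem_filter.mp hs
    obtain ⟨p, hp, r, hr, q, hq, hqz, rfl⟩ := exists_eq_insert_insert_of_mem_primeSets hs hzs
    exact mem_image.mpr ⟨⟨(p, r), q⟩, mem_sigma.mpr ⟨mem_product.mpr ⟨hp, hr⟩,
      mem_filter.mpr ⟨hq, by exact_mod_cast hqz⟩⟩, rfl⟩
  calc _ ≤ #(𝒯.image fun prq ↦ insert prq.1.1 (insert prq.2 prq.1.2)) := card_le_card hsub
    _ ≤ #𝒯 := card_image_le
    _ = _ := by rw [Finset.card_sigma, sum_product]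

theorem card_primesLE_filter_div_log_lt_mul_pow_le {x y X : ℝ} {n : ℕ} (hn : 0 < n)
    (hx : 1 < x) (hy : 0 ≤ y) (hxy : (y * log x) ^ 2 ≤ x) (hX : 0 ≤ X) :
    (#{q ∈ primesLE ⌊X⌋₊ | x / log x < y * ((q : ℕ) : ℝ) ^ n} : ℝ) ≤
      2 * n * log 4 * X / log x := by
  have hL : 0 < log x := log_pos hx
  have hc : 0 < log x / (2 * n) := by positivity
  calc _ ≤ (#{q ∈ primesLE ⌊X⌋₊ | log x / (2 * n) ≤ log (q : ℕ)} : ℝ) := by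
        refine mod_cast card_le_card (monotone_filter_right _ fun q _ hq ↦ ?_)
        rw [div_le_iff₀ (by positivity)]
        have := log_le_two_mul_log_of_div_log_lt hx hy hxy (q := q) (by exact_mod_cast hq)
        push_cast at this ⊢
        linarith
    _ ≤ log 4 * X / (log x / (2 * n)) := by
        rw [le_div_iff₀ hc]
        exact card_primesLE_filter_le_log_mul_le hX _
    _ = 2 * n * log 4 * X / log x := by field_simp

theorem card_primeSets_le (k : ℕ) {x y : ℝ} (hx : 1 < x) (hy : 0 ≤ y)
    (hxy : (y * log x) ^ 2 ≤ x) :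
    (#(primeSets (k + 2) x y) : ℝ) ≤ x / log x + 2 * (k + 1) * log 4 * x / log x *
      ((∑ p ∈ primesLE ⌊y⌋₊, (p : ℝ)⁻¹) * (∑ p ∈ primesLE ⌊x⌋₊, (p : ℝ)⁻¹) ^ k) := by
  have hL : 0 < log x := log_pos hx
  have hsmall := card_filter_prod_le (𝒮 := primeSets (k + 2) x y)
    (fun s hs p hp ↦ prime_of_mem_primeSets hs hp) (z := x / log x) (by positivity)
  rw [← card_filter_add_card_filter_not (fun s ↦ ((∏ p ∈ s, p : ℕ) : ℝ) ≤ x / log x)]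
  simp only [not_le]
  rw [Nat.cast_add]
  refine _root_.add_le_add hsmall ?_
  calc _ ≤ ∑ p ∈ primesLE ⌊y⌋₊, ∑ r ∈ (primesLE ⌊x⌋₊).powersetCard k,
        (#{q ∈ primesLE ⌊x / (p * ∏ i ∈ r, (i : ℝ))⌋₊ |
          x / log x < y * ((q : ℕ) : ℝ) ^ (k + 1)} : ℝ) :=
        mod_cast card_primeSets_filter_lt_prod_le k x y (x / log x)
    _ ≤ ∑ p ∈ primesLE ⌊y⌋₊, ∑ r ∈ (primesLE ⌊x⌋₊).powersetCard k,
        2 * ((k + 1 : ℕ) : ℝ) * log 4 * (x / (p * ∏ i ∈ r, (i : ℝ))) / log x := by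
        gcongr with p _ r
        exact card_primesLE_filter_div_log_lt_mul_pow_le k.succ_pos hx hy hxy (by positivity)
    _ = 2 * (k + 1) * log 4 * x / log x *
        ((∑ p ∈ primesLE ⌊y⌋₊, (p : ℝ)⁻¹) *
          ∑ r ∈ (primesLE ⌊x⌋₊).powersetCard k, ∏ i ∈ r, (i : ℝ)⁻¹) := by
        rw [sum_mul_sum, mul_sum]
        refine sum_congr rfl fun p _ ↦ ?_
        rw [mul_sum]
        refine sum_congr rfl fun r _ ↦ ?_
        rw [prod_inv_distrib]
        push_cast
        field_simp
    _ ≤ _ := by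
        have : 0 ≤ 2 * (k + 1) * log 4 * x / log x := by positivity
        gcongr
        exact sum_powersetCard_prod_le_pow _ (fun _ _ ↦ by positivity) k

theorem card_primeSets_one_log_pow_le {x : ℝ} (hL : exp (exp 1) ≤ log x)
    (hx : log x ^ 130 ≤ x) :
    (#(primeSets 1 x (log x ^ 64)) : ℝ) ≤ x / log x * (log (log x))⁻¹ := by
  have hL1 : 1 ≤ log x := le_trans (by linarith [add_one_le_exp 1, add_one_le_exp (exp 1)]) hL
  have hL2 : 0 < log (log x) := (exp_pos 1).trans_le (exp_one_le_log_log hL)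
  have hL2L : log (log x) ≤ log x := log_le_self (by linarith)
  refine (card_primeSets_one_le x (by positivity)).trans ?_
  rw [← div_eq_mul_inv, div_div, le_div_iff₀ (by positivity)]
  calc log x ^ 64 * (log x * log (log x)) ≤ log x ^ 64 * (log x * log x) := by gcongr
    _ = log x ^ 66 := by ring
    _ ≤ log x ^ 130 := pow_le_pow_right₀ hL1 (by norm_num)
    _ ≤ x := hx

theorem card_primeSets_log_pow_le (k : ℕ) {x : ℝ} (hL : exp (exp 1) ≤ log x)
    (hx : log x ^ 130 ≤ x) :
    (#(primeSets (k + 2) x (log x ^ 64)) : ℝ) ≤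
      400 * (k + 2) * 60 ^ (k + 2) * (x / log x) * log (log x) ^ k * log (log (log x)) := by
  have hL1 : 2 ≤ log x := le_trans (by linarith [add_one_le_exp 1, add_one_le_exp (exp 1)]) hL
  have hL2 : 1 ≤ log (log x) := le_trans (by linarith [add_one_le_exp 1]) (exp_one_le_log_log hL)
  have hL3 := one_le_log_log_log hL
  have hx2 : 2 ≤ x := by
    have : (2 : ℝ) ^ 130 ≤ x := hx.trans' (pow_le_pow_left₀ (by norm_num) hL1 _)
    linarith
  have hSy : ∑ p ∈ primesLE ⌊log x ^ 64⌋₊, (p : ℝ)⁻¹ ≤ 130 * log (log (log x)) := by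
    have h := sum_inv_primesLE_le (t := log x ^ 64)
      (hL1.trans (le_self_pow₀ (by linarith) (by norm_num)))
    rw [Real.log_pow, log_mul (by norm_num) (by positivity)] at h
    have : log (64 : ℕ) < 4.2 := by
      rw [show (64 : ℕ) = 2 ^ 6 by norm_num, Nat.cast_pow, Real.log_pow]
      push_cast
      linarith [log_two_lt_d9]
    linarith
  have hSx : ∑ p ∈ primesLE ⌊x⌋₊, (p : ℝ)⁻¹ ≤ 60 * log (log x) := by
    linarith [sum_inv_primesLE_le hx2]
  have hQ : 1 ≤ (60 : ℝ) ^ k * log (log x) ^ k * log (log (log x)) :=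
    one_le_mul_of_one_le_of_one_le
      (one_le_mul_of_one_le_of_one_le (one_le_pow₀ (by norm_num)) (one_le_pow₀ hL2)) hL3
  calc _ ≤ x / log x + 2 * (k + 1) * log 4 * x / log x *
        (130 * log (log (log x)) * (60 * log (log x)) ^ k) :=
        (card_primeSets_le k (by linarith) (by positivity)
          (by rw [← pow_succ, ← pow_mul]; exact hx)).trans (by gcongr)
    _ = x / log x * (1 + 260 * log 4 * (k + 1) *
        (60 ^ k * log (log x) ^ k * log (log (log x)))) := by
        rw [mul_pow]; field_simp; ring
    _ ≤ x / log x * (400 * 3600 * (k + 2) *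
        (60 ^ k * log (log x) ^ k * log (log (log x)))) := by
        gcongr
        generalize (60 : ℝ) ^ k * log (log x) ^ k * log (log (log x)) = Q at hQ ⊢
        have hkQ : 0 ≤ ((k : ℝ) + 1) * Q := mul_nonneg (by positivity) (by linarith)
        nlinarith [mul_le_mul_of_nonneg_right (by linarith [log_four_lt] : 260 * log 4 ≤ 364) hkQ]
    _ = _ := by ring

theorem count_small_least_prime_factor (ℓ : ℕ) (hℓ : 1 ≤ ℓ) :
    ∃ C x₀ : ℝ, 0 < C ∧ ∀ x : ℝ, x₀ ≤ x →
      (({n : ℕ | (n : ℝ) ≤ x ∧ ∃ s : Finset ℕ, s.card = ℓ ∧ (∀ p ∈ s, p.Prime) ∧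
          n = ∏ p ∈ s, p ∧ ∃ p ∈ s, (p : ℝ) ≤ (Real.log x) ^ (64 : ℕ)}.ncard : ℝ)) ≤
        C * (x / Real.log x) * (Real.log (Real.log x)) ^ ((ℓ : ℤ) - 2) *
          Real.log (Real.log (Real.log x)) := by
  obtain ⟨x₀, hx₀⟩ := eventually_atTop.mp (eventually_exp_exp_one_le_log_and_log_pow_le 130)
  refine ⟨400 * ℓ * 60 ^ ℓ, x₀, by positivity, fun x hx ↦ ?_⟩
  obtain ⟨hL, hxL⟩ := hx₀ x hx
  refine (Nat.cast_le.mpr (ncard_le_card_primeSets ℓ x _)).trans ?_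
  obtain rfl | ⟨k, rfl⟩ : ℓ = 1 ∨ ∃ k, ℓ = k + 2 :=
    (Nat.lt_or_ge ℓ 2).imp (by omega) fun h ↦ ⟨ℓ - 2, by omega⟩
  · have hcard := card_primeSets_one_log_pow_le hL hxL
    calc _ ≤ x / log x * (log (log x))⁻¹ := hcard
      _ ≤ 24000 * log (log (log x)) * (x / log x * (log (log x))⁻¹) :=
        le_mul_of_one_le_left ((Nat.cast_nonneg _).trans hcard)
          (by linarith [one_le_log_log_log hL])
      _ = _ := by norm_num; ring
  · simpa [zpow_natCast] using card_primeSets_log_pow_le k hL hxL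
end

section
/- For a prime $p \geq 3$, integers $\ell \geq 1$ and $1 \le |L| \le \ell$, one has $\sum_{g : k_L \mid g,\ g \mid k_L^\infty} \frac{1}{\varphi(g)^{|L|}} \prod_{\substack{q \mid k_L \\ q \ge 3}} \left(1 + \frac{1 - q^{-\nu_q(g)+1}}{q-2}\right)^{\ell - |L|} = \frac{1}{\varphi(k_L)^{|L|}} \prod_{\substack{q \mid k_L \\ q \geq 3}} \left(1 + R_q(|L|)\right)$, where $R_q(n) = \sum_{j=0}^{\ell - n} \binom{\ell-n}{j} \frac{(-1)^j (q-1)^{\ell-n-j}}{(q^{j+n}-1)(q-2)^{\ell-n}}$, for any odd squarefree positive integer $k_L$. -/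
/-!
Every `g` in the sum is `∏_{q ∣ k} q ^ (e_q + 1)` for a unique family `e_q ≥ 0` (this uses that
`k` is squarefree), and both `φ g` and the product over `q` factor along this decomposition. So the
sum is the product over `q ∣ k` of the one-variable series
`∑_e φ(q^(e+1))^(-n) (1 + (1 - q^(-e)) / (q - 2))^(ℓ - n)`, which converge absolutely since all
terms are nonnegative for `q ≥ 3`. Expanding the second factor binomially turns each series into a
combination of geometric series in `q^(-(j + n))`, with sums `1 + 1 / (q^(j + n) - 1)`; the
constant parts recombine by the binomial theorem for `(q - 2)^(ℓ - n) = ((q - 1) - 1)^(ℓ - n)`,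
leaving `(1 + R_q(n)) / (q - 1)^n`.
-/

open Finset

noncomputable section

/-- The factor at `q` of the summand for `ν_q(g) = e + 1`, where `m = ℓ - n`. -/
def localTerm (m n : ℕ) (q : ℝ) (e : ℕ) : ℝ :=
  1 / (q ^ e * (q - 1)) ^ n * (1 + (1 - q ^ (-(e : ℤ))) / (q - 2)) ^ m

/-- The paper's `R_q(n)`, where `m = ℓ - n`. -/
def localCorrection (m n : ℕ) (q : ℝ) : ℝ :=
  ∑ j ∈ range (m + 1),
    (m.choose j : ℝ) * ((-1) ^ j * (q - 1) ^ (m - j) / ((q ^ (j + n) - 1) * (q - 2) ^ m))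

end

lemma sum_choose_mul_neg_one_pow_mul_pow {R : Type*} [CommRing R] (x : R) (m : ℕ) :
    ∑ j ∈ range (m + 1), (m.choose j : R) * (-1) ^ j * x ^ (m - j) = (x - 1) ^ m := by
  rw [sub_eq_neg_add, add_pow]
  exact sum_congr rfl fun j _ => by ring

lemma hasSum_pow_inv_pow {q : ℝ} (hq : 1 < q) {k : ℕ} (hk : k ≠ 0) :
    HasSum (fun e : ℕ => (q⁻¹ ^ k) ^ e) (1 + 1 / (q ^ k - 1)) := by
  have hqk : q ^ k - 1 ≠ 0 := by linarith [one_lt_pow₀ hq hk]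
  convert hasSum_geometric_of_lt_one (by positivity) (pow_lt_one₀ (by positivity)
    (inv_lt_one_of_one_lt₀ hq) hk) using 1
  rw [inv_pow]
  field_simp
  ring

lemma localTerm_eq_sum {q : ℝ} (hq2 : q ≠ 2) (m n e : ℕ) :
    localTerm m n q e = ((q - 1) ^ n * (q - 2) ^ m)⁻¹ *
      ∑ j ∈ range (m + 1), m.choose j * (-1) ^ j * (q - 1) ^ (m - j) * (q⁻¹ ^ (j + n)) ^ e := by
  have hq2' : q - 2 ≠ 0 := sub_ne_zero.mpr hq2
  have hbase : 1 + (1 - q ^ (-(e : ℤ))) / (q - 2) = (-q⁻¹ ^ e + (q - 1)) / (q - 2) := by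
    rw [zpow_neg, zpow_natCast, ← inv_pow]
    field_simp
    ring
  rw [localTerm, hbase, div_pow, add_pow, sum_div, mul_sum, mul_sum]
  refine sum_congr rfl fun j _ => ?_
  rw [one_div, mul_pow, mul_inv]
  ring

lemma hasSum_localTerm {q : ℝ} (hq1 : 1 < q) (hq2 : q ≠ 2) (m : ℕ) {n : ℕ} (hn : n ≠ 0) :
    HasSum (localTerm m n q) (1 / (q - 1) ^ n * (1 + localCorrection m n q)) := by
  have hgeom := hasSum_sum fun j (_ : j ∈ range (m + 1)) =>
    (hasSum_pow_inv_pow hq1 (k := j + n) (by omega)).mul_left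
      ((m.choose j : ℝ) * (-1) ^ j * (q - 1) ^ (m - j))
  have hq1' : q - 1 ≠ 0 := by linarith
  have hq2' : q - 2 ≠ 0 := sub_ne_zero.mpr hq2
  have hvalue : ∑ j ∈ range (m + 1), (m.choose j : ℝ) * (-1) ^ j * (q - 1) ^ (m - j) *
      (1 + 1 / (q ^ (j + n) - 1)) = (q - 2) ^ m * (1 + localCorrection m n q) := by
    have hbinom : ∑ j ∈ range (m + 1), (m.choose j : ℝ) * (-1) ^ j * (q - 1) ^ (m - j) =
        (q - 2) ^ m := by
      rw [sum_choose_mul_neg_one_pow_mul_pow]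
      ring
    rw [mul_add, mul_one, localCorrection, mul_sum]
    nth_rw 1 [← hbinom]
    rw [← sum_add_distrib]
    refine sum_congr rfl fun j _ => ?_
    field_simp
  have h := hgeom.mul_left ((q - 1) ^ n * (q - 2) ^ m)⁻¹
  rwa [hvalue, ← mul_assoc, show ((q - 1) ^ n * (q - 2) ^ m)⁻¹ * (q - 2) ^ m = 1 / (q - 1) ^ n by
    field_simp, ← funext (localTerm_eq_sum hq2 m n)] at h

lemma localTerm_nonneg {q : ℝ} (hq : 2 < q) (m n e : ℕ) : 0 ≤ localTerm m n q e := by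
  have hpow : q ^ (-(e : ℤ)) ≤ 1 := zpow_le_one_of_nonpos₀ (by linarith) (by omega)
  have hbase : 0 ≤ 1 + (1 - q ^ (-(e : ℤ))) / (q - 2) := by
    have := div_nonneg (sub_nonneg.mpr hpow) (sub_nonneg.mpr hq.le)
    linarith
  unfold localTerm
  have : 0 ≤ q ^ e * (q - 1) := mul_nonneg (by positivity) (by linarith)
  positivity

lemma hasSum_fin_prod_of_nonneg {κ : Type*} {N : ℕ} {f : Fin N → κ → ℝ} {a : Fin N → ℝ}
    (hf : ∀ i, HasSum (f i) (a i)) (hf0 : ∀ i, 0 ≤ f i) :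
    HasSum (fun v : Fin N → κ => ∏ i, f i (v i)) (∏ i, a i) := by
  induction N with
  | zero => simp
  | succ N ih =>
    set g : (Fin N → κ) → ℝ := fun v => ∏ i, f i.succ (v i)
    have htail : HasSum g _ := ih (fun i => hf i.succ) (fun i => hf0 i.succ)
    have hg0 : 0 ≤ g := fun v => prod_nonneg fun i _ => hf0 i.succ (v i)
    have hmul := (hf 0).mul htail <|
      (hf 0).summable.mul_of_nonneg htail.summable (hf0 0) hg0
    rw [Fin.prod_univ_succ, ← (Fin.consEquiv fun _ => κ).hasSum_iff]
    simpa [g, Fin.prod_univ_succ, Function.comp_def] using hmul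

lemma hasSum_pi_prod_of_nonneg {ι κ : Type*} [Fintype ι] {f : ι → κ → ℝ} {a : ι → ℝ}
    (hf : ∀ i, HasSum (f i) (a i)) (hf0 : ∀ i, 0 ≤ f i) :
    HasSum (fun v : ι → κ => ∏ i, f i (v i)) (∏ i, a i) := by
  let e := Fintype.equivFin ι
  have h := hasSum_fin_prod_of_nonneg (fun j => hf (e.symm j)) (fun j => hf0 (e.symm j))
  rw [← e.symm.prod_comp, ← (e.arrowCongr (Equiv.refl κ)).symm.hasSum_iff]
  convert h using 1
  ext v
  simp [Equiv.arrowCongr, ← e.prod_comp]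

/-- Shifting the exponents by one makes `P → ℕ` parametrise exactly the `g` with prime factors
`P`. -/
def primePowProd (P : Finset ℕ) (v : P → ℕ) : ℕ := ∏ q : P, (q : ℕ) ^ (v q + 1)

section primePowProd

variable {P : Finset ℕ}

lemma primePowProd_ne_zero (hP : ∀ q ∈ P, q.Prime) (v : P → ℕ) : primePowProd P v ≠ 0 :=
  prod_ne_zero_iff.mpr fun q _ => pow_ne_zero _ (hP q q.2).ne_zero

lemma factorization_primePowProd (hP : ∀ q ∈ P, q.Prime) (v : P → ℕ) (p : ℕ) :
    (primePowProd P v).factorization p = if h : p ∈ P then v ⟨p, h⟩ + 1 else 0 := by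
  rw [primePowProd, Nat.factorization_prod_apply fun (q : P) _ => pow_ne_zero _ (hP q q.2).ne_zero]
  have hpow : ∀ q : P, ((q : ℕ) ^ (v q + 1)).factorization p = if (q : ℕ) = p then v q + 1 else 0 :=
    fun q => by rw [(hP q q.2).factorization_pow, Finsupp.single_apply]
  simp only [hpow]
  split_ifs with h
  · rw [sum_eq_single ⟨p, h⟩ (fun q _ hq => if_neg fun hqp => hq (Subtype.ext hqp)) (by simp)]
    simp
  · exact sum_eq_zero fun q _ => if_neg fun hqp : (q : ℕ) = p => h (hqp ▸ q.2)

lemma primeFactors_primePowProd (hP : ∀ q ∈ P, q.Prime) (v : P → ℕ) :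
    (primePowProd P v).primeFactors = P := by
  ext p
  rw [← Nat.support_factorization, Finsupp.mem_support_iff, factorization_primePowProd hP]
  split_ifs with h <;> simp [h]

lemma primePowProd_injective (hP : ∀ q ∈ P, q.Prime) : Function.Injective (primePowProd P) := by
  intro v w hvw
  funext q
  have := congrArg (fun g => g.factorization q) hvw
  simpa [factorization_primePowProd hP] using this

lemma exists_primePowProd_eq {g : ℕ} (hg : g ≠ 0) (hgP : g.primeFactors = P) :
    ∃ v, primePowProd P v = g := by
  have hP : ∀ q ∈ P, q.Prime := fun q hq => Nat.prime_of_mem_primeFactors (hgP ▸ hq)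
  refine ⟨fun q => g.factorization q - 1, Nat.eq_of_factorization_eq
    (primePowProd_ne_zero hP _) hg fun p => ?_⟩
  rw [factorization_primePowProd hP]
  have hsupp : p ∈ g.factorization.support ↔ p ∈ P := by rw [Nat.support_factorization, hgP]
  split_ifs with h
  · exact Nat.sub_add_cancel (Nat.one_le_iff_ne_zero.mpr (Finsupp.mem_support_iff.mp
      (hsupp.mpr h)))
  · exact (Finsupp.notMem_support_iff.mp (mt hsupp.mp h)).symm

lemma totient_primePowProd (hP : ∀ q ∈ P, q.Prime) (v : P → ℕ) :
    (primePowProd P v).totient = ∏ q : P, (q : ℕ) ^ v q * (q - 1) := by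
  rw [Nat.totient_eq_prod_factorization (primePowProd_ne_zero hP v),
    Nat.prod_factorization_eq_prod_primeFactors, primeFactors_primePowProd hP, ← prod_coe_sort P]
  refine prod_congr rfl fun q _ => ?_
  simp [factorization_primePowProd hP]

end primePowProd

lemma Squarefree.dvd_and_forall_prime_dvd_iff {k g : ℕ} (hk : Squarefree k) :
    (k ∣ g ∧ 0 < g ∧ ∀ p : ℕ, p.Prime → p ∣ g → p ∣ k) ↔
      g ≠ 0 ∧ g.primeFactors = k.primeFactors := by
  constructor
  · rintro ⟨hkg, hg, hpk⟩
    refine ⟨hg.ne', subset_antisymm (fun p hp => ?_) (Nat.primeFactors_mono hkg hg.ne')⟩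
    have := Nat.mem_primeFactors.mp hp
    exact Nat.mem_primeFactors.mpr ⟨this.1, hpk p this.1 this.2.1, hk.ne_zero⟩
  · rintro ⟨hg, hgk⟩
    refine ⟨?_, Nat.pos_of_ne_zero hg, fun p hp hpg => ?_⟩
    · rw [← Nat.prod_primeFactors_of_squarefree hk, ← hgk]
      exact Nat.prod_primeFactors_dvd g
    · exact Nat.dvd_of_mem_primeFactors (hgk ▸ Nat.mem_primeFactors.mpr ⟨hp, hpg, hg⟩)

lemma Squarefree.totient_eq_prod_primeFactors {k : ℕ} (hk : Squarefree k) :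
    k.totient = ∏ p ∈ k.primeFactors, (p - 1) := by
  have h := Nat.totient_mul_prod_primeFactors k
  rw [Nat.prod_primeFactors_of_squarefree hk, mul_comm] at h
  exact Nat.eq_of_mul_eq_mul_left (Nat.pos_of_ne_zero hk.ne_zero) h

lemma Odd.two_lt_of_mem_primeFactors {k q : ℕ} (hk : Odd k) (hq : q ∈ k.primeFactors) :
    2 < q := by
  obtain ⟨hp, hqk, -⟩ := Nat.mem_primeFactors.mp hq
  refine hp.two_le.lt_of_ne fun h => ?_
  subst h
  exact Nat.not_even_iff_odd.mpr hk (even_iff_two_dvd.mpr hqk)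

lemma one_div_prod_pow_mul_prod {ι α : Type*} [DivisionCommMonoid α] (s : Finset ι)
    (x y : ι → α) (n : ℕ) :
    1 / (∏ i ∈ s, x i) ^ n * ∏ i ∈ s, y i = ∏ i ∈ s, 1 / x i ^ n * y i := by
  simp only [one_div, ← prod_pow, ← prod_inv_distrib, ← prod_mul_distrib]

lemma one_div_totient_pow_mul_prod_eq_prod_localTerm {P : Finset ℕ} (hP : ∀ q ∈ P, q.Prime)
    (v : P → ℕ) (m n : ℕ) :
    1 / ((primePowProd P v).totient : ℝ) ^ n * ∏ q ∈ P,
        (1 + (1 - (q : ℝ) ^ (1 - ((primePowProd P v).factorization q : ℤ))) / ((q : ℝ) - 2)) ^ m =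
      ∏ q : P, localTerm m n q (v q) := by
  rw [totient_primePowProd hP, ← prod_coe_sort P, Nat.cast_prod, one_div_prod_pow_mul_prod]
  refine prod_congr rfl fun q _ => ?_
  rw [factorization_primePowProd hP, dif_pos q.2, Nat.cast_mul, Nat.cast_pow,
    Nat.cast_sub (hP q q.2).one_le, localTerm]
  push_cast
  ring_nf

open Classical in
theorem euler_product_g_sum_general (ℓ n : ℕ) (hn1 : 1 ≤ n)
    (k : ℕ) (hodd : Odd k) (hsq : Squarefree k) :
    ∑' g : ℕ, (if k ∣ g ∧ 0 < g ∧ (∀ p : ℕ, p.Prime → p ∣ g → p ∣ k) then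
        (1 / (Nat.totient g : ℝ) ^ n) *
          ∏ q ∈ k.primeFactors,
            (1 + (1 - (q : ℝ) ^ (1 - (g.factorization q : ℤ))) / ((q : ℝ) - 2)) ^ (ℓ - n)
      else 0) =
      (1 / (Nat.totient k : ℝ) ^ n) *
        ∏ q ∈ k.primeFactors,
          (1 + ∑ j ∈ Finset.range (ℓ - n + 1), ((ℓ - n).choose j : ℝ) *
              ((-1) ^ j * ((q : ℝ) - 1) ^ (ℓ - n - j) /
                (((q : ℝ) ^ (j + n) - 1) * ((q : ℝ) - 2) ^ (ℓ - n)))) := by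
  set P := k.primeFactors
  have hP : ∀ q ∈ P, q.Prime := fun q hq => Nat.prime_of_mem_primeFactors hq
  have hP2 : ∀ q : P, 2 < (q : ℝ) := fun q => by
    exact_mod_cast hodd.two_lt_of_mem_primeFactors q.2
  have hprod := hasSum_pi_prod_of_nonneg
    (fun q : P => hasSum_localTerm (by linarith [hP2 q]) (hP2 q).ne' (ℓ - n) (by omega : n ≠ 0))
    (fun q e => localTerm_nonneg (hP2 q) _ _ e)
  -- reindex the sum by `primePowProd P`, off whose range the summand vanishes
  refine (((primePowProd_injective hP).hasSum_iff fun g hg => if_neg fun hcond => hg ?_).mp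
    (hprod.congr_fun fun v => ?_)).tsum_eq.trans ?_
  · obtain ⟨hg0, hgP⟩ := hsq.dvd_and_forall_prime_dvd_iff.mp hcond
    exact exists_primePowProd_eq hg0 hgP
  · rw [Function.comp_apply, if_pos (hsq.dvd_and_forall_prime_dvd_iff.mpr
      ⟨primePowProd_ne_zero hP v, primeFactors_primePowProd hP v⟩)]
    exact one_div_totient_pow_mul_prod_eq_prod_localTerm hP v (ℓ - n) n
  · rw [hsq.totient_eq_prod_primeFactors, ← prod_coe_sort P, ← prod_coe_sort P, Nat.cast_prod,
      one_div_prod_pow_mul_prod]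
    refine prod_congr rfl fun q _ => ?_
    rw [Nat.cast_sub (hP q q.2).one_le, Nat.cast_one, localCorrection]

open Classical in
theorem euler_product_g_sum (ℓ n : ℕ) (hn1 : 1 ≤ n) (hnℓ : n ≤ ℓ)
    (k : ℕ) (hk : 0 < k) (hodd : Odd k) (hsq : Squarefree k) :
    ∑' g : ℕ, (if k ∣ g ∧ 0 < g ∧ (∀ p : ℕ, p.Prime → p ∣ g → p ∣ k) then
        (1 / (Nat.totient g : ℝ) ^ n) *
          ∏ q ∈ k.primeFactors,
            (1 + (1 - (q : ℝ) ^ (1 - (g.factorization q : ℤ))) / ((q : ℝ) - 2)) ^ (ℓ - n)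
      else 0) =
      (1 / (Nat.totient k : ℝ) ^ n) *
        ∏ q ∈ k.primeFactors,
          (1 + ∑ j ∈ Finset.range (ℓ - n + 1), ((ℓ - n).choose j : ℝ) *
              ((-1) ^ j * ((q : ℝ) - 1) ^ (ℓ - n - j) /
                (((q : ℝ) ^ (j + n) - 1) * ((q : ℝ) - 2) ^ (ℓ - n)))) :=
  euler_product_g_sum_general ℓ n hn1 k hodd hsq
end
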